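/- Let s and n be positive integers. If 2^{s+1} divides n, or if s ≥ 2 and 2^{s−1} divides n but 2^s does not divide n, then Φ_s(n) is even. -/

import Mathlib

/-- The generalized gcd of a nonnegative integer `n` at level `s`: the largest
`s`-th power `l ^ s` (with `l ≥ 1`) dividing `n`.  Applying it to `n = gcd(a, b)`
gives the generalized gcd `(a, b)_s` of the paper. -/
def sPowGcd (s n : ℕ) : ℕ := (Nat.findGreatest (fun l => l ^ s ∣ n) n) ^ s

/-- Klee's function `Φ_s(n)`: the number of `1 ≤ m ≤ n` with `(m, n)_s = 1`. -/
def klee (s n : ℕ) : ℕ :=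
  ((Finset.Icc 1 n).filter (fun m => sPowGcd s (Nat.gcd m n) = 1)).card

/-!
If `n = 2t` and every prime power `p ^ s` dividing `n` already divides `t`, then whether
`(m, n)_s = 1` depends only on `m mod t`. Hence `[1, n]` splits into two intervals of length `t`
contributing equally to `Φ_s(n)`. The divisibility hypotheses on the power of `2` in `n` are
exactly what makes `p = 2` satisfy this condition.
-/

open Finset Function

theorem Nat.filter_Ico_card_eq_mul_count_of_periodic (n k a : ℕ) (p : ℕ → Prop)
    [DecidablePred p] (pp : Periodic p a) :
    ((Ico n (n + k * a)).filter p).card = k * a.count p := by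
  induction k with
  | zero => simp
  | succ k ih =>
    have hsplit :
        Ico n (n + (k + 1) * a) = Ico n (n + k * a) ∪ Ico (n + k * a) (n + k * a + a) := by
      rw [Ico_union_Ico_eq_Ico (by omega) (by omega), add_mul, one_mul, add_assoc]
    rw [hsplit, filter_union, card_union_of_disjoint
      (disjoint_filter_filter (Ico_disjoint_Ico_consecutive _ _ _)), ih,
      Nat.filter_Ico_card_eq_of_periodic _ _ _ pp, add_mul, one_mul]

theorem sPowGcd_eq_one_iff {s k : ℕ} (hs : 0 < s) (hk : 0 < k) :
    sPowGcd s k = 1 ↔ ∀ p : ℕ, p.Prime → ¬ p ^ s ∣ k := by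
  set g := Nat.findGreatest (fun l => l ^ s ∣ k) k
  rw [sPowGcd, pow_eq_one_iff_left hs.ne']
  constructor
  · intro hg p hp hpk
    have hpg : p ≤ g := Nat.le_findGreatest
      ((Nat.le_self_pow hs.ne' p).trans (Nat.le_of_dvd hk hpk)) hpk
    exact hp.one_lt.not_ge (hg ▸ hpg)
  · intro hall
    by_contra hg
    obtain ⟨p, hp, hpg⟩ := Nat.exists_prime_and_dvd hg
    have hgk : g ^ s ∣ k := Nat.findGreatest_spec (P := fun l => l ^ s ∣ k) hk (by simp)
    exact hall p hp ((pow_dvd_pow_of_dvd hpg s).trans hgk)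

theorem sPowGcd_gcd_eq_one_iff {s n : ℕ} (m : ℕ) (hs : 0 < s) (hn : 0 < n) :
    sPowGcd s (m.gcd n) = 1 ↔ ∀ p : ℕ, p.Prime → p ^ s ∣ n → ¬ p ^ s ∣ m := by
  rw [sPowGcd_eq_one_iff hs (Nat.gcd_pos_of_pos_right m hn)]
  simp only [Nat.dvd_gcd_iff, not_and']

theorem periodic_sPowGcd_gcd_eq_one {s n t : ℕ} (hs : 0 < s) (hn : 0 < n)
    (ht : ∀ p : ℕ, p.Prime → p ^ s ∣ n → p ^ s ∣ t) :
    Periodic (fun m => sPowGcd s (m.gcd n) = 1) t := fun m => by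
  simp only [sPowGcd_gcd_eq_one_iff _ hs hn]
  exact propext <| forall₂_congr fun p hp => imp_congr_right fun hpn => by
    rw [Nat.dvd_add_left (ht p hp hpn)]

theorem prime_pow_dvd_div_two {s n p : ℕ} (hp : p.Prime) (h2 : 2 ∣ n)
    (h : 2 ^ (s + 1) ∣ n ∨ ¬ 2 ^ s ∣ n) (hpn : p ^ s ∣ n) : p ^ s ∣ n / 2 := by
  refine Nat.dvd_div_of_mul_dvd ?_
  rcases eq_or_ne p 2 with rfl | hp2
  · rw [← pow_succ']
    exact h.resolve_right (not_not.mpr hpn)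
  · have hcop : Nat.Coprime 2 (p ^ s) :=
      ((Nat.coprime_primes Nat.prime_two hp).mpr hp2.symm).pow_right s
    exact hcop.mul_dvd_of_dvd_of_dvd h2 hpn

theorem stmt_13 (s n : ℕ) (hs : 0 < s) (hn : 0 < n)
    (h : 2 ^ (s + 1) ∣ n ∨ (2 ≤ s ∧ 2 ^ (s - 1) ∣ n ∧ ¬ 2 ^ s ∣ n)) :
    Even (klee s n) := by
  obtain ⟨h2, h2pow⟩ : 2 ∣ n ∧ (2 ^ (s + 1) ∣ n ∨ ¬ 2 ^ s ∣ n) := by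
    rcases h with h | ⟨hs2, h, hn2⟩
    · exact ⟨(dvd_pow_self 2 s.succ_ne_zero).trans h, .inl h⟩
    · exact ⟨(dvd_pow_self 2 (by omega)).trans h, .inr hn2⟩
  have hper := periodic_sPowGcd_gcd_eq_one hs hn fun p hp => prime_pow_dvd_div_two hp h2 h2pow
  rw [klee, ← Ico_add_one_right_eq_Icc, show n + 1 = 1 + 2 * (n / 2) by omega,
    Nat.filter_Ico_card_eq_mul_count_of_periodic _ _ _ _ hper]
  exact even_two_mul _
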